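/- arXiv:1307.4884 — 2 statements merged into one kernel-verified Lean document; each statement's English description precedes it below -/
import Mathlib

section
/- For every a ∈ (0,1) and every Δ ≥ 1 there exists δ > 0 such that for every η > 0 there exists n₀ with the following property: for all n ≥ n₀ and every connected graph G on vertex set {1,…,n} with maximum degree at most Δ, if R ~ G(n, n^{−a}/n) then with probability at least 1 − η the graph G* = G ∪ R has vertex expansion at least δ/(Δ³ · n^{a} · log n). -/
open Real

/-- The Erdős–Rényi measure `G(n,p)`: the probability that the random graph lies in the
set `A` of graphs on `{1,…,n}`. -/
noncomputable def erProb (n : ℕ) (p : ℝ) (A : Set (SimpleGraph (Fin n))) : ℝ :=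
  ∑ R : SimpleGraph (Fin n),
    A.indicator (fun R => p ^ R.edgeSet.ncard * (1 - p) ^ (n.choose 2 - R.edgeSet.ncard)) R

/-- `vNbhd H S` is the external vertex neighborhood `N_H(S)`. -/
def vNbhd {V : Type*} (H : SimpleGraph V) (S : Set V) : Set V :=
  {v | v ∉ S ∧ ∃ u ∈ S, H.Adj u v}

/-!
Cut the connected graph `G` into connected parts of size between `k` and `(Δ + 1) k`, with
`k ≈ 64 n^a log n`, by repeatedly removing the subtree of a BFS tree hanging from the deepest vertex
whose subtree still has `k` vertices. Suppose some `U` with `|U| ≤ n / 2` has fewer than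
`|U| / (2 (Δ + 1) k)` neighbours in `G ∪ R`. Let `A` be the parts inside `U` and `B` the parts
meeting `N_G(U)`; by connectivity every part meeting `U` is in `A` or in `B`. Counting gives
`|B| < |A|`, the union `Z` of the parts in `A ∪ B` has at most `3n/4` vertices, and every edge of
`R` leaving `⋃ A` ends in `Z` or in a set `Y ⊆ N(U)` with `|Y| < |A|`. So `R` has no edge between
`⋃ A` (at least `|A| k` vertices) and the complement of `Z ∪ Y` (at least `n / 8` vertices), an
event of probability at most `exp (-p |A| k n / 8) ≤ n^(-8|A|)`. There are at most `n^(3j)`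
triples `(A, B, Y)` with `|A| = j`, so a union bound over them leaves failure probability `2 / n`.
-/

open Finset SimpleGraph

namespace SimpleGraph

variable {V : Type*} {G : SimpleGraph V}

lemma Reachable.exists_adj_dist_lt {u v : V} (h : G.Reachable u v) (hne : u ≠ v) :
    ∃ w, G.Adj u w ∧ G.dist w v < G.dist u v := by
  obtain ⟨p, hp⟩ := h.exists_walk_length_eq_dist
  cases p with
  | nil => exact absurd rfl hne
  | cons hadj q => exact ⟨_, hadj, (dist_le q).trans_lt (by simp [← hp])⟩

lemma induce_preconnected_of_forall_reachable {s : Set V} {v : V} (hv : v ∈ s)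
    (h : ∀ u (hu : u ∈ s), (G.induce s).Reachable ⟨u, hu⟩ ⟨v, hv⟩) :
    (G.induce s).Preconnected :=
  fun x y => (h x x.2).trans (h y y.2).symm

end SimpleGraph

lemma Finpartition.card_filter_inter_nonempty_le {α : Type*} [DecidableEq α] {s : Finset α}
    (P : Finpartition s) (t : Finset α) : #{p ∈ P.parts | (p ∩ t).Nonempty} ≤ #t := by
  refine (card_le_card fun p hp => ?_).trans (card_image_le (s := t) (f := P.part))
  obtain ⟨hp, v, hv⟩ := mem_filter.1 hp
  exact mem_image.2 ⟨v, (mem_inter.1 hv).2, P.part_eq_of_mem hp (mem_inter.1 hv).1⟩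

lemma card_filter_powerset_card_lt_le {α : Type*} (s : Finset α) {m : ℕ} (hs : #s ≤ m)
    (hm : 2 ≤ m) (j : ℕ) : #{t ∈ s.powerset | #t < j} ≤ m ^ j := by
  classical
  have hsub : {t ∈ s.powerset | #t < j} ⊆ (range j).biUnion s.powersetCard := by
    intro t ht
    obtain ⟨hts, htj⟩ := mem_filter.1 ht
    exact mem_biUnion.2 ⟨#t, mem_range.2 htj, mem_powersetCard.2 ⟨mem_powerset.1 hts, rfl⟩⟩
  calc #{t ∈ s.powerset | #t < j} ≤ ∑ i ∈ range j, #(s.powersetCard i) :=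
        (card_le_card hsub).trans card_biUnion_le
    _ ≤ ∑ i ∈ range j, m ^ i := by
        refine sum_le_sum fun i _ => ?_
        rw [card_powersetCard]
        exact (Nat.choose_le_pow _ _).trans (Nat.pow_le_pow_left hs i)
    _ ≤ m ^ j := (Nat.geomSum_lt hm fun i hi => mem_range.1 hi).le

section Boundary

variable {V : Type*} {G : SimpleGraph V}

lemma vNbhd_mono {H : SimpleGraph V} (hGH : G ≤ H) (S : Set V) : vNbhd G S ⊆ vNbhd H S :=
  fun _ ⟨hv, u, hu, hadj⟩ => ⟨hv, u, hu, hGH hadj⟩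

lemma inter_vNbhd_nonempty_of_induce_preconnected {s U : Set V}
    (hs : (G.induce s).Preconnected) {x y : V} (hx : x ∈ s) (hxU : x ∈ U) (hy : y ∈ s)
    (hyU : y ∉ U) : (s ∩ vNbhd G U).Nonempty := by
  obtain ⟨w⟩ := hs ⟨x, hx⟩ ⟨y, hy⟩
  obtain ⟨d, -, hd₁, hd₂⟩ := w.exists_boundary_dart {z : s | (z : V) ∈ U} hxU hyU
  exact ⟨d.snd, d.snd.2, hd₂, d.fst, hd₁, d.adj⟩

end Boundary

section ParentMap

variable {V : Type*} {G : SimpleGraph V} {W : Finset V} {r : V} {par : V → V}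
  {depth : V → ℕ}

structure IsParentMap (G : SimpleGraph V) (W : Finset V) (r : V) (par : V → V) (depth : V → ℕ) :
    Prop where
  adj : ∀ v ∈ W, v ≠ r → G.Adj v (par v)
  par_mem : ∀ v ∈ W, v ≠ r → par v ∈ W
  depth_lt : ∀ v ∈ W, v ≠ r → depth (par v) < depth v

lemma exists_isParentMap (hW : (G.induce ↑W).Preconnected) (hr : r ∈ W) :
    ∃ par depth, IsParentMap G W r par depth := by
  classical
  let depth : V → ℕ := fun v => if hv : v ∈ W then (G.induce ↑W).dist ⟨v, hv⟩ ⟨r, hr⟩ else 0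
  have hparent : ∀ v ∈ W, v ≠ r → ∃ u, G.Adj v u ∧ u ∈ W ∧ depth u < depth v := by
    intro v hv hvr
    obtain ⟨⟨u, hu⟩, hadj, hlt⟩ :=
      (hW ⟨v, hv⟩ ⟨r, hr⟩).exists_adj_dist_lt (by simpa using hvr)
    have hu : u ∈ W := hu
    exact ⟨u, hadj, hu, by simpa only [depth, dif_pos hu, dif_pos hv] using hlt⟩
  have : Nonempty V := ⟨r⟩
  choose! par hadj hmem hlt using hparent
  exact ⟨par, depth, ⟨hadj, hmem, hlt⟩⟩

def ParentStep (X : Set V) (r : V) (par : V → V) (a b : V) : Prop :=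
  a ∈ X ∧ a ≠ r ∧ par a = b ∧ b ∈ X

variable (W r par) in
open Classical in
noncomputable def subtree (v : V) : Finset V :=
  {u ∈ W | Relation.ReflTransGen (ParentStep ↑W r par) u v}

variable (W r par) in
open Classical in
noncomputable def children (v : V) : Finset V := {c ∈ W | c ≠ r ∧ par c = v}

lemma mem_subtree {u v : V} :
    u ∈ subtree W r par v ↔ u ∈ W ∧ Relation.ReflTransGen (ParentStep ↑W r par) u v := by
  classical
  simp [subtree]

lemma mem_children {c v : V} : c ∈ children W r par v ↔ c ∈ W ∧ c ≠ r ∧ par c = v := by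
  classical
  simp [children]

lemma mem_subtree_self {v : V} (hv : v ∈ W) : v ∈ subtree W r par v :=
  mem_subtree.2 ⟨hv, .refl⟩

lemma subtree_subset {v : V} : subtree W r par v ⊆ W := fun _ hu => (mem_subtree.1 hu).1

namespace IsParentMap

variable (hP : IsParentMap G W r par depth)
include hP

lemma reflTransGen_root {X : Set V} (hXW : X ⊆ ↑W) (hX : ∀ u ∈ X, u ≠ r → par u ∈ X) :
    ∀ u ∈ X, Relation.ReflTransGen (ParentStep X r par) u r := by
  intro u hu
  induction h : depth u using Nat.strong_induction_on generalizing u with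
  | _ d ih =>
    by_cases hur : u = r
    · exact hur ▸ .refl
    · exact .head ⟨hu, hur, rfl, hX u hu hur⟩
        (ih _ (h ▸ hP.depth_lt u (hXW hu) hur) _ (hX u hu hur) rfl)

lemma reachable_of_reflTransGen {X : Set V} (hXW : X ⊆ ↑W) {u v : V} (hu : u ∈ X) (hv : v ∈ X)
    (h : Relation.ReflTransGen (ParentStep X r par) u v) :
    (G.induce X).Reachable ⟨u, hu⟩ ⟨v, hv⟩ := by
  induction h using Relation.ReflTransGen.head_induction_on with
  | refl => rfl
  | head hstep _ ih =>
    obtain ⟨haX, har, rfl, hpX⟩ := hstep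
    exact (induce_adj.2 (hP.adj _ (hXW haX) har)).reachable.trans (ih hpX)

lemma subtree_root : subtree W r par r = W := by
  refine subset_antisymm subtree_subset fun u hu => mem_subtree.2 ⟨hu, ?_⟩
  exact hP.reflTransGen_root subset_rfl (fun u hu hur => hP.par_mem u hu hur) u hu

lemma subtree_preconnected {v : V} (hv : v ∈ W) :
    (G.induce ↑(subtree W r par v)).Preconnected := by
  have hvS : v ∈ subtree W r par v := mem_subtree_self hv
  refine induce_preconnected_of_forall_reachable hvS fun u hu => ?_
  refine hP.reachable_of_reflTransGen (coe_subset.2 subtree_subset) hu hvS ?_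
  obtain ⟨-, h⟩ := mem_subtree.1 hu
  clear hu
  induction h using Relation.ReflTransGen.head_induction_on with
  | refl => exact .refl
  | head hstep hrest ih =>
    obtain ⟨haW, har, hpar, hbW⟩ := hstep
    exact .head ⟨mem_subtree.2 ⟨haW, .head ⟨haW, har, hpar, hbW⟩ hrest⟩, har, hpar,
      mem_subtree.2 ⟨hbW, hrest⟩⟩ ih

lemma sdiff_subtree_preconnected [DecidableEq V] (hr : r ∈ W) {v : V} (hvr : v ≠ r) :
    (G.induce ↑(W \ subtree W r par v)).Preconnected := by
  have hrX : r ∈ W \ subtree W r par v := by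
    refine mem_sdiff.2 ⟨hr, fun hrS => ?_⟩
    rcases Relation.ReflTransGen.cases_head (mem_subtree.1 hrS).2 with h | ⟨_, ⟨-, h, -⟩, -⟩
    exacts [hvr h.symm, h rfl]
  have hXW : (↑(W \ subtree W r par v) : Set V) ⊆ ↑W := coe_subset.2 sdiff_subset
  have hclosed : ∀ u ∈ (↑(W \ subtree W r par v) : Set V), u ≠ r →
      par u ∈ (↑(W \ subtree W r par v) : Set V) := by
    intro u hu hur
    obtain ⟨huW, huS⟩ := mem_sdiff.1 hu
    refine mem_sdiff.2 ⟨hP.par_mem u huW hur, fun hpS => huS ?_⟩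
    obtain ⟨hpW, hp⟩ := mem_subtree.1 hpS
    exact mem_subtree.2 ⟨huW, .head ⟨huW, hur, rfl, hpW⟩ hp⟩
  refine induce_preconnected_of_forall_reachable (mem_coe.2 hrX)
    fun u hu => hP.reachable_of_reflTransGen hXW hu _ ?_
  exact hP.reflTransGen_root hXW hclosed u hu

lemma card_subtree_le [Finite V] {Δ k : ℕ} (hΔ : ∀ v, (G.neighborSet v).ncard ≤ Δ) {v : V}
    (hsmall : ∀ c ∈ children W r par v, #(subtree W r par c) < k) :
    #(subtree W r par v) ≤ 1 + Δ * (k - 1) := by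
  classical
  have hsub : subtree W r par v ⊆ insert v ((children W r par v).biUnion (subtree W r par)) := by
    intro u hu
    obtain ⟨huW, h⟩ := mem_subtree.1 hu
    rcases Relation.ReflTransGen.cases_tail h with rfl | ⟨c, huc, hcW, hcr, hcv, -⟩
    · exact mem_insert_self _ _
    · exact mem_insert_of_mem (mem_biUnion.2 ⟨c, mem_children.2 ⟨hcW, hcr, hcv⟩,
        mem_subtree.2 ⟨huW, huc⟩⟩)
  have hchildren : #(children W r par v) ≤ Δ := by
    have hadj : (↑(children W r par v) : Set V) ⊆ G.neighborSet v := by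
      intro c hc
      obtain ⟨hcW, hcr, rfl⟩ := mem_children.1 (mem_coe.1 hc)
      exact (hP.adj c hcW hcr).symm
    exact (Set.ncard_coe_finset _ ▸ Set.ncard_le_ncard hadj).trans (hΔ v)
  calc #(subtree W r par v)
      ≤ #((children W r par v).biUnion (subtree W r par)) + 1 :=
        (card_le_card hsub).trans (card_insert_le _ _)
    _ ≤ #(children W r par v) * (k - 1) + 1 := by
        gcongr
        exact card_biUnion_le_card_mul _ _ _ fun c hc => Nat.le_sub_one_of_lt (hsmall c hc)
    _ ≤ 1 + Δ * (k - 1) := by nlinarith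

end IsParentMap

lemma exists_preconnected_split [Finite V] [DecidableEq V] {Δ k : ℕ}
    (hΔ : ∀ v, (G.neighborSet v).ncard ≤ Δ)
    (hW : (G.induce ↑W).Preconnected) (hkW : k ≤ #W) (hWk : 1 + Δ * (k - 1) < #W) :
    ∃ S ⊆ W, k ≤ #S ∧ #S ≤ 1 + Δ * (k - 1) ∧ (G.induce ↑S).Preconnected ∧
      (G.induce ↑(W \ S)).Preconnected := by
  obtain ⟨r, hr⟩ : W.Nonempty := card_pos.1 (by omega)
  obtain ⟨par, depth, hP⟩ := exists_isParentMap hW hr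
  -- the deepest vertex whose subtree is still large has only small child subtrees
  obtain ⟨v, hvT, hvmax⟩ := exists_max_image {v ∈ W | k ≤ #(subtree W r par v)} depth
    ⟨r, mem_filter.2 ⟨hr, by rwa [hP.subtree_root]⟩⟩
  obtain ⟨hvW, hvk⟩ := mem_filter.1 hvT
  have hsmall : ∀ c ∈ children W r par v, #(subtree W r par c) < k := by
    intro c hc
    obtain ⟨hcW, hcr, rfl⟩ := mem_children.1 hc
    by_contra! hck
    have := hvmax c (mem_filter.2 ⟨hcW, hck⟩)
    have := hP.depth_lt c hcW hcr
    omega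
  have hcard := hP.card_subtree_le hΔ hsmall
  have hvr : v ≠ r := by
    rintro rfl
    rw [hP.subtree_root] at hcard
    omega
  exact ⟨_, subtree_subset, hvk, hcard, hP.subtree_preconnected hvW,
    hP.sdiff_subtree_preconnected hr hvr⟩

end ParentMap

theorem exists_finpartition_preconnected {V : Type*} [Fintype V] [DecidableEq V]
    {G : SimpleGraph V} {Δ k : ℕ} (hΔ : ∀ v, (G.neighborSet v).ncard ≤ Δ) (hk : 1 ≤ k)
    (W : Finset V) (hW : (G.induce ↑W).Preconnected) (hkW : k ≤ #W) :
    ∃ P : Finpartition W, ∀ p ∈ P.parts,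
      k ≤ #p ∧ #p ≤ (Δ + 1) * k ∧ (G.induce ↑p).Preconnected := by
  induction h : #W using Nat.strong_induction_on generalizing W with
  | _ m ih =>
    by_cases hsmall : #W ≤ (Δ + 1) * k
    · refine ⟨Finpartition.indiscrete (card_pos.1 (by omega)).ne_empty, fun p hp => ?_⟩
      rw [Finpartition.indiscrete_parts, mem_singleton] at hp
      exact hp ▸ ⟨hkW, hsmall, hW⟩
    · have hΔk : Δ * (k - 1) + k ≤ (Δ + 1) * k := by
        rw [add_mul, one_mul]; gcongr; exact Nat.sub_le k 1
      obtain ⟨S, hSW, hkS, hSk, hS, hWS⟩ := exists_preconnected_split hΔ hW hkW (by omega)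
      have hcard : #(W \ S) = #W - #S := card_sdiff_of_subset hSW
      obtain ⟨P, hP⟩ := ih #(W \ S) (by omega) (W \ S) hWS (by omega) rfl
      refine ⟨P.extend (b := S) (card_pos.1 (by omega)).ne_empty sdiff_disjoint
        (sdiff_union_of_subset hSW), fun p hp => ?_⟩
      rcases mem_insert.1 hp with rfl | hp
      · exact ⟨hkS, by omega, hS⟩
      · exact hP p hp

section Blocks

variable {V : Type*} [Fintype V] [DecidableEq V] {G : SimpleGraph V}

def blockEvent (A B : Finset (Finset V)) (Y : Finset V) : Set (SimpleGraph V) :=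
  {R | ∀ s ∈ A.biUnion id, ∀ t ∈ ((A ∪ B).biUnion id ∪ Y)ᶜ, ¬ R.Adj s t}

theorem exists_blockEvent_of_card_vNbhd_lt {R : SimpleGraph V} {K : ℕ}
    (P : Finpartition (univ : Finset V))
    (hP : ∀ p ∈ P.parts, #p ≤ K ∧ (G.induce ↑p).Preconnected) (U : Finset V)
    (hU : 2 * K * (vNbhd (G ⊔ R) ↑U).ncard < #U) :
    ∃ A ⊆ P.parts, ∃ B ⊆ P.parts, ∃ Y : Finset V, #B < #A ∧ #Y < #A ∧
      2 * #((A ∪ B).biUnion id) ≤ 3 * #U ∧ R ∈ blockEvent A B Y := by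
  classical
  set N := vNbhd (G ⊔ R) ↑U
  set NG := (vNbhd G ↑U).toFinset
  set A := {p ∈ P.parts | p ⊆ U}
  set B := {p ∈ P.parts | (p ∩ NG).Nonempty}
  set Y := {t ∈ univ \ (A ∪ B).biUnion id | ∃ s ∈ A.biUnion id, R.Adj s t}
  have hAU : A.biUnion id ⊆ U := biUnion_subset.2 fun p hp => (mem_filter.1 hp).2
  -- a part meeting `U` either lies in `U` or, being connected, meets `N_G(U)`
  have hcover : U ⊆ (A ∪ B).biUnion id := by
    intro u hu
    obtain ⟨p, hp, hup⟩ := P.exists_mem (mem_univ u)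
    refine mem_biUnion.2 ⟨p, ?_, hup⟩
    by_cases hpU : p ⊆ U
    · exact mem_union_left _ (mem_filter.2 ⟨hp, hpU⟩)
    · obtain ⟨y, hyp, hyU⟩ := not_subset.1 hpU
      obtain ⟨v, hvp, hvN⟩ := inter_vNbhd_nonempty_of_induce_preconnected (hP p hp).2
        (mem_coe.2 hup) (mem_coe.2 hu) (mem_coe.2 hyp) (mt mem_coe.1 hyU)
      exact mem_union_right _ (mem_filter.2 ⟨hp, v, mem_inter.2 ⟨hvp, Set.mem_toFinset.2 hvN⟩⟩)
  have hB : #B ≤ N.ncard := by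
    refine (P.card_filter_inter_nonempty_le NG).trans ?_
    rw [← Set.ncard_eq_toFinset_card']
    exact Set.ncard_le_ncard (vNbhd_mono le_sup_left _)
  have hY : #Y ≤ N.ncard := by
    rw [← Set.ncard_coe_finset]
    refine Set.ncard_le_ncard fun t ht => ?_
    obtain ⟨htZ, s, hs, hst⟩ := mem_filter.1 (mem_coe.1 ht)
    exact ⟨fun htU => (mem_sdiff.1 htZ).2 (hcover htU), s, hAU hs, Or.inr hst⟩
  have hSA : #(A.biUnion id) ≤ K * #A := (card_biUnion_le_card_mul _ _ _ fun p hp =>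
    (hP p (mem_filter.1 hp).1).1).trans_eq (mul_comm _ _)
  have hSB : #(B.biUnion id) ≤ K * #B := (card_biUnion_le_card_mul _ _ _ fun p hp =>
    (hP p (mem_filter.1 hp).1).1).trans_eq (mul_comm _ _)
  have hZ : #((A ∪ B).biUnion id) ≤ #(A.biUnion id) + #(B.biUnion id) := by
    rw [union_biUnion]
    exact card_union_le _ _
  have hUZ := card_le_card hcover
  have hN : 2 * N.ncard < #A + #B := Nat.lt_of_mul_lt_mul_left (a := K) (by nlinarith)
  refine ⟨A, filter_subset _ _, B, filter_subset _ _, Y, by omega, by omega, ?_, ?_⟩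
  · have := card_le_card hAU
    nlinarith
  · intro s hs t ht hst
    rw [mem_compl] at ht
    exact ht (mem_union_right _ (mem_filter.2 ⟨mem_sdiff.2 ⟨mem_univ t,
      fun htZ => ht (mem_union_left _ htZ)⟩, s, hs, hst⟩))

def blockIndex (P : Finpartition (univ : Finset V)) :
    Finset (Σ _ : Finset (Finset V), Finset (Finset V) × Finset V) :=
  {x ∈ P.parts.powerset.sigma fun A =>
      {B ∈ P.parts.powerset | #B < #A} ×ˢ {Y ∈ (univ : Finset V).powerset | #Y < #A} |
    4 * #((x.1 ∪ x.2.1).biUnion id) ≤ 3 * Fintype.card V}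

lemma mem_blockIndex {P : Finpartition (univ : Finset V)}
    {x : Σ _ : Finset (Finset V), Finset (Finset V) × Finset V} :
    x ∈ blockIndex P ↔ x.1 ⊆ P.parts ∧ (x.2.1 ⊆ P.parts ∧ #x.2.1 < #x.1) ∧ #x.2.2 < #x.1 ∧
      4 * #((x.1 ∪ x.2.1).biUnion id) ≤ 3 * Fintype.card V := by
  simp [blockIndex, and_assoc]

lemma compl_subset_biUnion_blockEvent {K : ℕ} {c : ℝ}
    (P : Finpartition (univ : Finset V))
    (hP : ∀ p ∈ P.parts, #p ≤ K ∧ (G.induce ↑p).Preconnected) (hc : 2 * K * c ≤ 1) :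
    {R | ∀ U : Set V, U.Nonempty → (U.ncard : ℝ) ≤ Fintype.card V / 2 →
        c * U.ncard ≤ (vNbhd (G ⊔ R) U).ncard}ᶜ ⊆
      ⋃ x ∈ blockIndex P, blockEvent x.1 x.2.1 x.2.2 := by
  intro R hR
  simp only [Set.mem_compl_iff, Set.mem_ofPred_eq, not_forall, not_le] at hR
  obtain ⟨U, hUne, hUn, hlt⟩ := hR
  lift U to Finset V using U.toFinite
  rw [Set.ncard_coe_finset] at hUn hlt
  have hnat : 2 * K * (vNbhd (G ⊔ R) ↑U).ncard < #U := by
    have hU : (0 : ℝ) < #U := by exact_mod_cast card_pos.2 (by simpa using hUne)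
    have : (2 * K * (vNbhd (G ⊔ R) ↑U).ncard : ℝ) < #U := by
      rcases (Nat.cast_nonneg K : (0 : ℝ) ≤ K).eq_or_lt with hK | hK
      · simpa [← hK] using hU
      · calc (2 * K * (vNbhd (G ⊔ R) ↑U).ncard : ℝ) < 2 * K * (c * #U) := by gcongr
          _ = (2 * K * c) * #U := by ring
          _ ≤ #U := mul_le_of_le_one_left hU.le hc
    exact_mod_cast this
  obtain ⟨A, hA, B, hB, Y, hBA, hYA, hZ, hRA⟩ := exists_blockEvent_of_card_vNbhd_lt P hP U hnat
  have hUn' : 2 * #U ≤ Fintype.card V := by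
    have : (2 * #U : ℝ) ≤ Fintype.card V := by linarith
    exact_mod_cast this
  exact Set.mem_iUnion₂.2
    ⟨⟨A, B, Y⟩, mem_blockIndex.2 ⟨hA, ⟨hB, hBA⟩, hYA, by dsimp only; omega⟩, hRA⟩

end Blocks

section ErdosRenyi

variable {n : ℕ} {p : ℝ}

lemma edgeSet_fromEdgeSet_of_mem_powerset {F : Finset (Sym2 (Fin n))}
    (hF : F ∈ (⊤ : SimpleGraph (Fin n)).edgeFinset.powerset) :
    (fromEdgeSet (F : Set (Sym2 (Fin n)))).edgeSet = ↑F := by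
  rw [edgeSet_fromEdgeSet, sdiff_eq_left, Set.disjoint_left]
  intro e he
  simpa using (mem_edgeFinset.1 (mem_powerset.1 hF he) : e ∈ (⊤ : SimpleGraph _).edgeSet)

lemma sum_simpleGraph_eq_sum_powerset {M : Type*} [AddCommMonoid M]
    (f : SimpleGraph (Fin n) → M) :
    ∑ R, f R = ∑ F ∈ (⊤ : SimpleGraph (Fin n)).edgeFinset.powerset, f (fromEdgeSet ↑F) := by
  classical
  refine sum_nbij' (fun R => R.edgeFinset) (fun F => fromEdgeSet ↑F) ?_ ?_ ?_ ?_ ?_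
  · intro R _
    exact mem_powerset.2 (edgeFinset_mono le_top)
  · intro F _
    exact mem_univ _
  · intro R _
    simp
  · intro F hF
    exact coe_injective (by rw [coe_edgeFinset, edgeSet_fromEdgeSet_of_mem_powerset hF])
  · intro R _
    simp

lemma erProb_disjoint_edgeSet {E : Finset (Sym2 (Fin n))}
    (hE : E ⊆ (⊤ : SimpleGraph (Fin n)).edgeFinset) :
    erProb n p {R | Disjoint R.edgeSet ↑E} = (1 - p) ^ #E := by
  classical
  set T := (⊤ : SimpleGraph (Fin n)).edgeFinset
  have hT : n.choose 2 = #E + #(T \ E) := by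
    rw [card_sdiff_of_subset hE, card_edgeFinset_top_eq_card_choose_two, Fintype.card_fin]
    have := card_le_card hE
    rw [card_edgeFinset_top_eq_card_choose_two, Fintype.card_fin] at this
    omega
  have hfilter : T.powerset.filter (fun F => Disjoint F E) = (T \ E).powerset := by
    ext F
    simp [subset_sdiff]
  rw [erProb, sum_simpleGraph_eq_sum_powerset]
  calc _ = ∑ F ∈ T.powerset.filter (fun F => Disjoint F E),
        p ^ #F * (1 - p) ^ (n.choose 2 - #F) := by
        rw [sum_filter]
        refine sum_congr rfl fun F hF => ?_
        simp [Set.indicator_apply, edgeSet_fromEdgeSet_of_mem_powerset hF]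
    _ = (1 - p) ^ #E * ∑ F ∈ (T \ E).powerset, p ^ #F * (1 - p) ^ (#(T \ E) - #F) := by
        rw [hfilter, mul_sum]
        refine sum_congr rfl fun F hF => ?_
        rw [hT, show #E + #(T \ E) - #F = #E + (#(T \ E) - #F) by
          have := card_le_card (mem_powerset.1 hF); omega, pow_add]
        ring
    _ = (1 - p) ^ #E := by rw [sum_pow_mul_eq_add_pow, add_sub_cancel, one_pow, mul_one]

lemma erProb_univ : erProb n p Set.univ = 1 := by
  simpa using erProb_disjoint_edgeSet (n := n) (p := p) (E := ∅) (empty_subset _)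

lemma erProb_add_erProb_compl (A : Set (SimpleGraph (Fin n))) :
    erProb n p A + erProb n p Aᶜ = 1 := by
  rw [← erProb_univ (n := n) (p := p), erProb, erProb, erProb, ← sum_add_distrib]
  simp

lemma erProb_le_sum_of_subset_biUnion (hp0 : 0 ≤ p) (hp1 : p ≤ 1) {ι : Type*} (t : Finset ι)
    (E : ι → Set (SimpleGraph (Fin n))) {A : Set (SimpleGraph (Fin n))}
    (hA : A ⊆ ⋃ i ∈ t, E i) : erProb n p A ≤ ∑ i ∈ t, erProb n p (E i) := by
  have hw (B : Set (SimpleGraph (Fin n))) (R : SimpleGraph (Fin n)) :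
      0 ≤ B.indicator (fun R => p ^ R.edgeSet.ncard * (1 - p) ^ (n.choose 2 - R.edgeSet.ncard)) R :=
    Set.indicator_nonneg (fun _ _ => mul_nonneg (pow_nonneg hp0 _) (pow_nonneg (by linarith) _)) R
  simp only [erProb]
  rw [sum_comm]
  refine sum_le_sum fun R _ => ?_
  by_cases hR : R ∈ A
  · obtain ⟨i, hi, hRi⟩ := Set.mem_iUnion₂.1 (hA hR)
    rw [Set.indicator_of_mem hR]
    exact (Set.indicator_of_mem hRi _).symm.trans_le (single_le_sum (fun j _ => hw (E j) R) hi)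
  · rw [Set.indicator_of_notMem hR]
    exact sum_nonneg fun j _ => hw (E j) R

lemma erProb_forall_not_adj_le (hp1 : p ≤ 1) {S T : Finset (Fin n)} (hST : Disjoint S T) :
    erProb n p {R | ∀ s ∈ S, ∀ t ∈ T, ¬ R.Adj s t} ≤ exp (-(p * (#S * #T))) := by
  set E := (S ×ˢ T).image (fun x => s(x.1, x.2))
  have hne : ∀ s ∈ S, ∀ t ∈ T, s ≠ t := fun s hs t ht h => disjoint_left.1 hST hs (h ▸ ht)
  have hE : E ⊆ (⊤ : SimpleGraph (Fin n)).edgeFinset := by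
    intro e he
    obtain ⟨⟨s, t⟩, hst, rfl⟩ := mem_image.1 he
    rw [mem_product] at hst
    simpa using hne s hst.1 t hst.2
  have hcard : #E = #S * #T := by
    rw [card_image_of_injOn, card_product]
    rintro ⟨a, b⟩ hab ⟨c, d⟩ hcd h
    simp only [coe_product, Set.mem_prod, mem_coe] at hab hcd
    rcases Sym2.eq_iff.1 h with ⟨rfl, rfl⟩ | ⟨rfl, rfl⟩
    · rfl
    · exact absurd rfl (hne _ hab.1 _ hcd.2)
  have hevent : {R : SimpleGraph (Fin n) | ∀ s ∈ S, ∀ t ∈ T, ¬ R.Adj s t} =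
      {R | Disjoint R.edgeSet ↑E} := by
    ext R
    simp only [E, Set.mem_ofPred_eq, Set.disjoint_right, coe_image, coe_product, Set.mem_image,
      Set.mem_prod, mem_coe, Prod.exists]
    exact ⟨fun h e ⟨s, t, ⟨hs, ht⟩, he⟩ => he ▸ h s hs t ht,
      fun h s hs t ht hst => h ⟨s, t, ⟨hs, ht⟩, rfl⟩ hst⟩
  rw [hevent, erProb_disjoint_edgeSet hE, hcard]
  calc (1 - p) ^ (#S * #T) ≤ exp (-p) ^ (#S * #T) :=
        pow_le_pow_left₀ (by linarith) (by linarith [add_one_le_exp (-p)]) _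
    _ = exp (-(p * (#S * #T))) := by
        rw [← exp_nat_mul]
        push_cast
        ring_nf

end ErdosRenyi

section UnionBound

variable {n : ℕ}

lemma erProb_blockEvent_le {k : ℕ} {p : ℝ} (P : Finpartition (univ : Finset (Fin n)))
    (hP : ∀ q ∈ P.parts, k ≤ #q) (hn : 0 < n) (hk : 8 ≤ k) (hp0 : 0 ≤ p) (hp1 : p ≤ 1)
    (hpk : 64 * log n ≤ p * n * k) {A B : Finset (Finset (Fin n))} {Y : Finset (Fin n)}
    (hA : A ⊆ P.parts) (hYA : #Y < #A) (hZ : 4 * #((A ∪ B).biUnion id) ≤ 3 * n) :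
    erProb n p (blockEvent A B Y) ≤ ((n : ℝ) ^ (8 * #A))⁻¹ := by
  set S := A.biUnion id
  set Z := (A ∪ B).biUnion id
  have hSZ : S ⊆ Z := biUnion_subset_biUnion_of_subset_left _ subset_union_left
  have hS : k * #A ≤ #S := by
    rw [card_biUnion fun x hx y hy hxy => P.disjoint (hA hx) (hA hy) hxy]
    simpa [mul_comm] using card_nsmul_le_sum A card k fun q hq => hP q (hA hq)
  -- the parts in `A` are large, so there are few of them and `(Z ∪ Y)ᶜ` has linear size
  have hT : n ≤ 8 * #(Z ∪ Y)ᶜ := by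
    have h1 : #(Z ∪ Y)ᶜ = n - #(Z ∪ Y) := by rw [card_compl, Fintype.card_fin]
    have h2 := card_union_le Z Y
    have h3 : 8 * #A ≤ k * #A := Nat.mul_le_mul_right _ hk
    have h4 := card_le_card hSZ
    omega
  refine (erProb_forall_not_adj_le hp1 (disjoint_compl_right_iff.2
    (hSZ.trans subset_union_left))).trans ?_
  have hS' : (k * #A : ℝ) ≤ #S := by exact_mod_cast hS
  have hT' : (n : ℝ) ≤ 8 * #(Z ∪ Y)ᶜ := by exact_mod_cast hT
  have hexp : 8 * #A * log n ≤ p * (#S * #(Z ∪ Y)ᶜ) :=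
    calc 8 * #A * log n = #A * (64 * log n) / 8 := by ring
      _ ≤ #A * (p * n * k) / 8 := by gcongr
      _ = p * (k * #A) * n / 8 := by ring
      _ ≤ p * #S * (8 * #(Z ∪ Y)ᶜ) / 8 := by gcongr
      _ = p * (#S * #(Z ∪ Y)ᶜ) := by ring
  calc exp (-(p * (#S * #(Z ∪ Y)ᶜ))) ≤ exp (-(8 * #A * log n)) := by gcongr
    _ = ((n : ℝ) ^ (8 * #A))⁻¹ := by
        rw [exp_neg, show (8 * #A * log n : ℝ) = ((8 * #A : ℕ) : ℝ) * log n by push_cast; ring,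
          exp_nat_mul, exp_log (by exact_mod_cast hn)]

lemma sum_blockIndex_le (hn : 2 ≤ n) (P : Finpartition (univ : Finset (Fin n))) :
    ∑ x ∈ blockIndex P, ((n : ℝ) ^ (8 * #x.1))⁻¹ ≤ 2 / n := by
  set N := #P.parts
  have hN : N ≤ n := by simpa using P.card_parts_le_card
  set g : ℕ → ℝ := fun j => (#{B ∈ P.parts.powerset | #B < j} *
    #{Y ∈ (univ : Finset (Fin n)).powerset | #Y < j} : ℕ) * ((n : ℝ) ^ (8 * j))⁻¹
  have hg (j : ℕ) : N.choose j • g j ≤ 1 / n * (1 / 2) ^ j := by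
    rcases Nat.eq_zero_or_pos j with rfl | hj
    · simp [g]
    have hB := card_filter_powerset_card_lt_le P.parts hN hn j
    have hY := card_filter_powerset_card_lt_le (univ : Finset (Fin n)) (by simp) hn j
    have hC : N.choose j ≤ n ^ j := (Nat.choose_le_pow _ _).trans (Nat.pow_le_pow_left hN j)
    have hx1 : (n : ℝ) ≤ (n : ℝ) ^ j := le_self_pow₀ (by exact_mod_cast (by omega : 1 ≤ n)) hj.ne'
    have hx2 : (2 : ℝ) ^ j ≤ (n : ℝ) ^ j := pow_le_pow_left₀ (by norm_num) (by exact_mod_cast hn) j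
    set x := (n : ℝ) ^ j
    have hx : 1 ≤ x := le_trans (by exact_mod_cast (by omega : 1 ≤ n)) hx1
    rw [nsmul_eq_mul]
    calc (N.choose j : ℝ) * g j ≤ x * ((x * x) * (x ^ 8)⁻¹) := by
          simp only [g, x, ← pow_mul, mul_comm j 8]
          gcongr
          · exact_mod_cast hC
          · push_cast
            gcongr
            · exact_mod_cast hB
            · exact_mod_cast hY
      _ = (x ^ 5)⁻¹ := by field_simp
      _ ≤ (x * x)⁻¹ := by gcongr; nlinarith [pow_le_pow_right₀ hx (show 2 ≤ 5 by norm_num)]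
      _ ≤ 1 / n * (1 / 2) ^ j := by
          rw [one_div, one_div, inv_pow, ← mul_inv]
          gcongr
  calc ∑ x ∈ blockIndex P, ((n : ℝ) ^ (8 * #x.1))⁻¹
      ≤ ∑ x ∈ P.parts.powerset.sigma (fun A => {B ∈ P.parts.powerset | #B < #A} ×ˢ
          {Y ∈ (univ : Finset (Fin n)).powerset | #Y < #A}), ((n : ℝ) ^ (8 * #x.1))⁻¹ :=
        sum_le_sum_of_subset_of_nonneg (filter_subset _ _) fun _ _ _ => by positivity
    _ = ∑ A ∈ P.parts.powerset, g #A := by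
        rw [sum_sigma]
        refine sum_congr rfl fun A _ => ?_
        simp only [sum_const, card_product, nsmul_eq_mul, g]
    _ = ∑ j ∈ range (N + 1), N.choose j • g j := sum_powerset_apply_card g
    _ ≤ ∑ j ∈ range (N + 1), (1 / n : ℝ) * (1 / 2) ^ j := sum_le_sum fun j _ => hg j
    _ ≤ 2 / n := by
        rw [← mul_sum]
        have := sum_geometric_two_le (N + 1)
        rw [div_eq_mul_one_div 2, mul_comm 2]
        gcongr

theorem one_sub_le_erProb_of_finpartition {k K : ℕ} {p c : ℝ} {G : SimpleGraph (Fin n)}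
    (P : Finpartition (univ : Finset (Fin n)))
    (hP : ∀ q ∈ P.parts, k ≤ #q ∧ #q ≤ K ∧ (G.induce ↑q).Preconnected)
    (hn : 2 ≤ n) (hk : 8 ≤ k) (hp0 : 0 ≤ p) (hp1 : p ≤ 1) (hpk : 64 * log n ≤ p * n * k)
    (hc : 2 * K * c ≤ 1) :
    1 - 2 / n ≤ erProb n p {R | ∀ U : Set (Fin n), U.Nonempty → (U.ncard : ℝ) ≤ n / 2 →
      c * U.ncard ≤ (vNbhd (G ⊔ R) U).ncard} := by
  set good := {R : SimpleGraph (Fin n) | ∀ U : Set (Fin n), U.Nonempty → (U.ncard : ℝ) ≤ n / 2 →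
    c * U.ncard ≤ (vNbhd (G ⊔ R) U).ncard}
  have hcover : goodᶜ ⊆ ⋃ x ∈ blockIndex P, blockEvent x.1 x.2.1 x.2.2 := by
    have := compl_subset_biUnion_blockEvent P (fun q hq => (hP q hq).2) hc
    rwa [Fintype.card_fin] at this
  have hbad : erProb n p goodᶜ ≤ 2 / n := calc
    _ ≤ ∑ x ∈ blockIndex P, erProb n p (blockEvent x.1 x.2.1 x.2.2) :=
        erProb_le_sum_of_subset_biUnion hp0 hp1 _ _ hcover
    _ ≤ ∑ x ∈ blockIndex P, ((n : ℝ) ^ (8 * #x.1))⁻¹ := by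
        refine sum_le_sum fun x hx => ?_
        obtain ⟨hA, -, hY, hZ⟩ := mem_blockIndex.1 hx
        exact erProb_blockEvent_le P (fun q hq => (hP q hq).1) (by omega) hk hp0 hp1 hpk hA hY
          (by simpa using hZ)
    _ ≤ 2 / n := sum_blockIndex_le hn P
  linarith [erProb_add_erProb_compl (n := n) (p := p) good]

end UnionBound

lemma eventually_mul_rpow_mul_log_le {a : ℝ} (ha : a < 1) {C : ℝ} (hC : 0 < C) :
    ∀ᶠ n : ℕ in Filter.atTop, C * (n : ℝ) ^ a * log n ≤ n := by
  have h := (isLittleO_log_rpow_atTop (sub_pos.2 ha)).bound (inv_pos.2 hC)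
  filter_upwards [tendsto_natCast_atTop_atTop.eventually (h.and (Filter.eventually_gt_atTop 0))]
    with n ⟨hn, hpos⟩
  rw [norm_eq_abs, norm_eq_abs, abs_of_nonneg (rpow_nonneg hpos.le _)] at hn
  calc C * (n : ℝ) ^ a * log n ≤ C * n ^ a * (C⁻¹ * n ^ (1 - a)) := by
        gcongr
        exact (le_abs_self _).trans hn
    _ = n ^ (a + (1 - a)) := by rw [rpow_add hpos]; field_simp
    _ = n := by simp

theorem one_sub_le_erProb_of_connected {a : ℝ} (ha : 0 < a) {Δ n : ℕ} (hΔ : 1 ≤ Δ) (hn : 3 ≤ n)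
    (hbig : 128 * (n : ℝ) ^ a * log n ≤ n) {G : SimpleGraph (Fin n)} (hG : G.Connected)
    (hdeg : ∀ v, (G.neighborSet v).ncard ≤ Δ) :
    1 - 2 / n ≤ erProb n ((n : ℝ) ^ (-a) / n) {R | ∀ U : Set (Fin n), U.Nonempty →
      (U.ncard : ℝ) ≤ n / 2 →
        (Δ : ℝ) ^ 2 / 512 / ((Δ : ℝ) ^ 3 * (n : ℝ) ^ a * log n) * U.ncard ≤
          (vNbhd (G ⊔ R) U).ncard} := by
  have hn1 : (1 : ℝ) ≤ n := by exact_mod_cast (by omega : 1 ≤ n)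
  have hlog : 1 ≤ log n := by
    rw [le_log_iff_exp_le (by positivity)]
    linarith [exp_one_lt_d9, (show (3 : ℝ) ≤ n by exact_mod_cast hn)]
  have hx : 1 ≤ (n : ℝ) ^ a * log n := one_le_mul_of_one_le_of_one_le (one_le_rpow hn1 ha.le) hlog
  set k := ⌈64 * ((n : ℝ) ^ a * log n)⌉₊
  have hk64 : 64 * ((n : ℝ) ^ a * log n) ≤ k := Nat.le_ceil _
  have hk128 : (k : ℝ) ≤ 128 * ((n : ℝ) ^ a * log n) := by
    linarith [Nat.ceil_le_two_mul (show (2⁻¹ : ℝ) ≤ 64 * ((n : ℝ) ^ a * log n) by linarith)]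
  have hk8 : 8 ≤ k := by exact_mod_cast (show (8 : ℝ) ≤ k by linarith)
  have hkn : k ≤ n := by exact_mod_cast (show (k : ℝ) ≤ n by linarith)
  obtain ⟨P, hP⟩ := exists_finpartition_preconnected (k := k) hdeg (by omega) univ
    (by rw [coe_univ]; exact (induceUnivIso G).preconnected_iff.2 hG.preconnected) (by simpa)
  have hΔ' : (1 : ℝ) ≤ Δ := by exact_mod_cast hΔ
  refine one_sub_le_erProb_of_finpartition P (K := (Δ + 1) * k) hP (by omega) hk8 (by positivity)
    ?_ ?_ ?_
  · rw [div_le_one (by positivity)]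
    exact (rpow_le_one_of_one_le_of_nonpos hn1 (by linarith)).trans hn1
  · rw [div_mul_cancel₀ _ (by positivity), rpow_neg (by positivity),
      le_inv_mul_iff₀ (by positivity)]
    linarith
  · rw [← mul_div_assoc, div_le_one (by positivity)]
    push_cast
    calc 2 * ((Δ + 1) * k) * ((Δ : ℝ) ^ 2 / 512)
        ≤ 2 * ((Δ + Δ) * (128 * ((n : ℝ) ^ a * log n))) * ((Δ : ℝ) ^ 2 / 512) := by gcongr
      _ = (Δ : ℝ) ^ 3 * (n : ℝ) ^ a * log n := by ring

/-- Vertex expansion of a connected bounded-degree graph perturbed with the subconstant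
edge probability `n^{-a}/n`: a.a.s. the vertex expansion of `G ∪ R` is at least
`δ / (Δ³ · n^a · log n)`. -/
theorem vertex_expansion_of_perturbed_subconstant :
    ∀ a : ℝ, 0 < a → a < 1 → ∀ Δ : ℕ, 1 ≤ Δ → ∃ δ : ℝ, 0 < δ ∧
      ∀ η : ℝ, 0 < η → ∃ n₀ : ℕ, ∀ n : ℕ, n₀ ≤ n →
        ∀ G : SimpleGraph (Fin n), G.Connected →
          (∀ v : Fin n, (G.neighborSet v).ncard ≤ Δ) →
          1 - η ≤ erProb n ((n : ℝ) ^ (-a) / n)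
            {R | ∀ U : Set (Fin n), U.Nonempty → (U.ncard : ℝ) ≤ n / 2 →
              δ / ((Δ : ℝ) ^ 3 * (n : ℝ) ^ a * Real.log n) * U.ncard
                ≤ ((vNbhd (G ⊔ R) U).ncard : ℝ)} := by
  intro a ha0 ha1 Δ hΔ
  refine ⟨Δ ^ 2 / 512, by positivity, fun η hη => ?_⟩
  obtain ⟨n₀, hn₀⟩ := Filter.eventually_atTop.1 <|
    (eventually_mul_rpow_mul_log_le ha1 (by norm_num : (0 : ℝ) < 128)).and <|
      (Filter.eventually_ge_atTop 3).and <|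
        (tendsto_const_div_atTop_nhds_zero_nat 2).eventually (ge_mem_nhds hη)
  refine ⟨n₀, fun n hn G hG hdeg => ?_⟩
  obtain ⟨hbig, hn3, hηn⟩ := hn₀ n hn
  linarith [one_sub_le_erProb_of_connected ha0 hΔ hn3 hbig hG hdeg]
end

section
/- Let Δ ≥ 1 and k ≥ 1, and let H be a graph on an n-element vertex set V. Suppose V is partitioned into nonempty disjoint sets V₁,…,V_t such that for each i the subgraph of H induced on V_i is connected and k ≤ |V_i| ≤ Δ·k, and suppose that for every nonempty I ⊆ {1,…,t} with |I| ≤ t/2 there are at least |I|/2 indices j ∉ I such that H contains an edge between V_j and ⋃_{i∈I} V_i. Then every vertex set A with 1 ≤ |A| ≤ n/2 satisfies |N_H(A)| ≥ |A|/(7·Δ²·k). -/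
private lemma walk_cross {W : Type*} {G : SimpleGraph W} {T : Set W} :
    ∀ {x y : W}, G.Walk x y → x ∈ T → y ∉ T → ∃ u v, u ∈ T ∧ v ∉ T ∧ G.Adj u v := by
  intro x y w
  induction w with
  | nil => intro hx hy; exact absurd hx hy
  | @cons a b c h q ih =>
    intro hx hy
    by_cases hb : b ∈ T
    · exact ih hb hy
    · exact ⟨a, b, hx, hb, h⟩

private lemma ncard_biUnion_le' {α β : Type*} [Fintype α] (K : Finset β) (P : β → Set α) :
    (⋃ i ∈ K, P i).ncard ≤ ∑ i ∈ K, (P i).ncard := by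
  classical
  induction K using Finset.induction with
  | empty => simp
  | @insert a s ha ih =>
    rw [Finset.set_biUnion_insert, Finset.sum_insert ha]
    exact le_trans (Set.ncard_union_le _ _) (Nat.add_le_add_left ih _)

/-- The deterministic blob lemma: if the `n` vertices of `H` are partitioned into connected
blobs `V₁, …, V_t` of sizes between `k` and `Δ·k`, and every nonempty family `I` of at most
`t/2` blobs has edges of `H` to at least `|I|/2` blobs outside `I`, then every vertex set
`A` with `1 ≤ |A| ≤ n/2` satisfies `|N_H(A)| ≥ |A| / (7·Δ²·k)`. -/
theorem vertex_expansion_from_blob_expansion {V : Type*} [Fintype V] (n : ℕ)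
    (hn : Fintype.card V = n) (Δ k : ℕ) (hΔ : 1 ≤ Δ) (hk : 1 ≤ k)
    (H : SimpleGraph V) (t : ℕ) (P : Fin t → Set V)
    (hne : ∀ i, (P i).Nonempty)
    (hdisj : ∀ i j, i ≠ j → Disjoint (P i) (P j))
    (hcover : (⋃ i, P i) = Set.univ)
    (hconn : ∀ i, (H.induce (P i)).Connected)
    (hsize : ∀ i, k ≤ (P i).ncard ∧ (P i).ncard ≤ Δ * k)
    (hblob : ∀ I : Finset (Fin t), I.Nonempty → (I.card : ℝ) ≤ t / 2 →
      (I.card : ℝ) / 2 ≤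
        ({j : Fin t | j ∉ I ∧ ∃ u ∈ P j, ∃ w : V, (∃ i ∈ I, w ∈ P i) ∧ H.Adj u w}.ncard : ℝ)) :
    ∀ A : Set V, A.Nonempty → (A.ncard : ℝ) ≤ n / 2 →
      (A.ncard : ℝ) / (7 * Δ ^ 2 * k) ≤ ((vNbhd H A).ncard : ℝ) := by
  classical
  intro A hA hAn
  have hV : Nonempty V := ⟨hA.some⟩
  set NB := vNbhd H A with hNBdef
  have hΔR : (1:ℝ) ≤ (Δ:ℝ) := by exact_mod_cast hΔ
  have hkR : (1:ℝ) ≤ (k:ℝ) := by exact_mod_cast hk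
  have hmR : (0:ℝ) ≤ ((NB.ncard : ℕ) : ℝ) := by positivity
  -- blob classes
  set Full : Finset (Fin t) := Finset.univ.filter (fun i => P i ⊆ A) with hFull
  set Good : Finset (Fin t) := Finset.univ.filter (fun i => (P i ∩ NB).Nonempty) with hGood
  set Part : Finset (Fin t) :=
    Finset.univ.filter (fun i => (P i ∩ A).Nonempty ∧ ¬ P i ⊆ A) with hPart
  set NonFull : Finset (Fin t) := Finset.univ.filter (fun i => ¬ P i ⊆ A) with hNonFull
  -- each Good blob contributes a distinct vertex of NB
  have hGoodle : Good.card ≤ NB.ncard := by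
    have hch : ∀ i ∈ Good, (P i ∩ NB).Nonempty := by
      intro i hi
      simpa [hGood] using hi
    choose! c hc using fun i (hi : i ∈ Good) => hch i hi
    rw [Set.ncard_eq_toFinset_card']
    refine Finset.card_le_card_of_injOn c (fun i hi => ?_) ?_
    · simpa using (hc i hi).2
    · intro i hi j hj hij
      by_contra hne'
      exact Set.disjoint_left.mp (hdisj i j hne') (hc i (Finset.mem_coe.mp hi)).1
        (hij ▸ (hc j (Finset.mem_coe.mp hj)).1)
  -- partial blobs are good
  have hPartGood : Part ⊆ Good := by
    intro i hi
    simp only [hPart, Finset.mem_filter, Finset.mem_univ, true_and] at hi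
    obtain ⟨⟨a, ha, haA⟩, hnsub⟩ := hi
    obtain ⟨b, hb, hbA⟩ := Set.not_subset.mp hnsub
    obtain ⟨w⟩ := (hconn i).preconnected ⟨a, ha⟩ ⟨b, hb⟩
    obtain ⟨u, v, huT, hvT, huv⟩ :=
      walk_cross (T := {x : (P i) | (x : V) ∈ A}) w haA hbA
    have hadj : H.Adj (u : V) (v : V) := by simpa using huv
    simp only [hGood, Finset.mem_filter, Finset.mem_univ, true_and]
    exact ⟨(v : V), v.2, hvT, (u : V), huT, hadj⟩
  -- covering bound
  have cover_le : ∀ (S : Set V) (K : Finset (Fin t)),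
      (∀ v ∈ S, ∀ i, v ∈ P i → i ∈ K) → S.ncard ≤ K.card * (Δ * k) := by
    intro S K hK
    have hsub : S ⊆ ⋃ i ∈ K, P i := by
      intro v hv
      have hv' : v ∈ ⋃ i, P i := by rw [hcover]; trivial
      obtain ⟨i, hi⟩ := Set.mem_iUnion.mp hv'
      exact Set.mem_biUnion (hK v hv i hi) hi
    calc S.ncard ≤ (⋃ i ∈ K, P i).ncard := Set.ncard_le_ncard hsub (Set.toFinite _)
      _ ≤ ∑ i ∈ K, (P i).ncard := ncard_biUnion_le' K P
      _ ≤ K.card * (Δ * k) := by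
          rw [← smul_eq_mul]
          exact Finset.sum_le_card_nsmul _ _ _ (fun i _ => (hsize i).2)
  -- key inequality: |A| ≤ 3 * |Good| * Δk
  have key : (A.ncard : ℝ) ≤ 3 * (Good.card : ℝ) * ((Δ:ℝ) * (k:ℝ)) := by
    have hgR : (0:ℝ) ≤ (Good.card : ℝ) := by positivity
    by_cases hf : (Full.card : ℝ) ≤ (t : ℝ) / 2
    · -- few full blobs
      have hAcov : A.ncard ≤ (Full ∪ Part).card * (Δ * k) := by
        refine cover_le A (Full ∪ Part) ?_
        intro v hv i hi
        by_cases hsub : P i ⊆ A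
        · exact Finset.mem_union_left _ (by simp [hFull, hsub])
        · exact Finset.mem_union_right _ (by simp [hPart, hsub]; exact ⟨v, hi, hv⟩)
      have hPle : (Part.card : ℝ) ≤ (Good.card : ℝ) := by
        exact_mod_cast Finset.card_le_card hPartGood
      have hFle : (Full.card : ℝ) ≤ 2 * (Good.card : ℝ) := by
        rcases Finset.eq_empty_or_nonempty Full with hF0 | hF0
        · simp [hF0]
        · have hS := hblob Full hF0 hf
          have hsub : {j : Fin t | j ∉ Full ∧ ∃ u ∈ P j, ∃ w : V,
              (∃ i ∈ Full, w ∈ P i) ∧ H.Adj u w} ⊆ (Good : Set (Fin t)) := by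
            rintro j ⟨hjF, u, huj, w, ⟨i, hiF, hwi⟩, hadj⟩
            have hiA : P i ⊆ A := by
              simpa [hFull] using hiF
            have hwA : w ∈ A := hiA hwi
            by_cases huA : u ∈ A
            · refine Finset.mem_coe.mpr (hPartGood ?_)
              simp only [hPart, Finset.mem_filter, Finset.mem_univ, true_and]
              exact ⟨⟨u, huj, huA⟩, by simpa [hFull] using hjF⟩
            · refine Finset.mem_coe.mpr ?_
              simp only [hGood, Finset.mem_filter, Finset.mem_univ, true_and]
              exact ⟨u, huj, huA, w, hwA, hadj.symm⟩
          have hle : ({j : Fin t | j ∉ Full ∧ ∃ u ∈ P j, ∃ w : V,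
              (∃ i ∈ Full, w ∈ P i) ∧ H.Adj u w}.ncard : ℝ) ≤ (Good.card : ℝ) := by
            rw [← Set.ncard_coe_finset Good]
            exact_mod_cast Set.ncard_le_ncard hsub (Set.toFinite _)
          linarith
      have hFPle : ((Full ∪ Part).card : ℝ) ≤ (Full.card : ℝ) + (Part.card : ℝ) := by
        exact_mod_cast Finset.card_union_le Full Part
      have hAcovR : (A.ncard : ℝ) ≤ ((Full ∪ Part).card : ℝ) * ((Δ:ℝ) * (k:ℝ)) := by
        exact_mod_cast hAcov
      have hΔk : (0:ℝ) ≤ (Δ:ℝ) * (k:ℝ) := by positivity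
      nlinarith
    · -- many full blobs: work with the complement
      push_neg at hf
      -- NonFull is small
      have hcards : Full.card + NonFull.card = t := by
        have := Finset.card_filter_add_card_filter_not
          (s := (Finset.univ : Finset (Fin t))) (p := fun i => P i ⊆ A)
        simpa [hFull, hNonFull] using this
      have hNFsmall : (NonFull.card : ℝ) ≤ (t : ℝ) / 2 := by
        have : (Full.card : ℝ) + (NonFull.card : ℝ) = (t : ℝ) := by exact_mod_cast hcards
        linarith
      -- the blobs disjoint from A ∪ NB
      set E0 : Finset (Fin t) :=
        Finset.univ.filter (fun i => P i ∩ A = ∅ ∧ P i ∩ NB = ∅) with hE0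
      have hE0NF : E0 ⊆ NonFull := by
        intro i hi
        simp only [hE0, Finset.mem_filter, Finset.mem_univ, true_and] at hi
        simp only [hNonFull, Finset.mem_filter, Finset.mem_univ, true_and]
        intro hsub
        obtain ⟨x, hx⟩ := hne i
        exact Set.eq_empty_iff_forall_notMem.mp hi.1 x ⟨hx, hsub hx⟩
      have hNFsplit : NonFull ⊆ E0 ∪ Good := by
        intro i hi
        simp only [hNonFull, Finset.mem_filter, Finset.mem_univ, true_and] at hi
        by_cases hG : (P i ∩ NB).Nonempty
        · exact Finset.mem_union_right _ (by simp [hGood, hG])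
        · have hNBe : P i ∩ NB = ∅ := Set.not_nonempty_iff_eq_empty.mp hG
          by_cases hAe : P i ∩ A = ∅
          · exact Finset.mem_union_left _ (by simp [hE0, hAe, hNBe])
          · refine Finset.mem_union_right _ (hPartGood ?_)
            simp only [hPart, Finset.mem_filter, Finset.mem_univ, true_and]
            exact ⟨Set.nonempty_iff_ne_empty.mpr hAe, hi⟩
      have hE0le : (E0.card : ℝ) ≤ 2 * (Good.card : ℝ) := by
        rcases Finset.eq_empty_or_nonempty E0 with hE | hE
        · simp [hE]
        · have hE0t : (E0.card : ℝ) ≤ (t : ℝ) / 2 :=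
            le_trans (by exact_mod_cast Finset.card_le_card hE0NF) hNFsmall
          have hS := hblob E0 hE hE0t
          have hsub : {j : Fin t | j ∉ E0 ∧ ∃ u ∈ P j, ∃ w : V,
              (∃ i ∈ E0, w ∈ P i) ∧ H.Adj u w} ⊆ (Good : Set (Fin t)) := by
            rintro j ⟨hjE, u, huj, w, ⟨i, hiE, hwi⟩, hadj⟩
            simp only [hE0, Finset.mem_filter, Finset.mem_univ, true_and] at hiE
            obtain ⟨hiA, hiNB⟩ := hiE
            have hwA : w ∉ A := fun h => Set.eq_empty_iff_forall_notMem.mp hiA w ⟨hwi, h⟩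
            have huA : u ∉ A := by
              intro h
              have hw : w ∈ P i ∩ NB := ⟨hwi, hwA, u, h, hadj⟩
              rw [hiNB] at hw
              exact hw
            by_contra hjG
            have hjNB : P j ∩ NB = ∅ := by
              by_contra hne'
              exact hjG (Finset.mem_coe.mpr (by
                simp only [hGood, Finset.mem_filter, Finset.mem_univ, true_and]
                exact Set.nonempty_iff_ne_empty.mpr hne'))
            have hjA : (P j ∩ A).Nonempty := by
              by_contra hAe
              exact hjE (by simp [hE0, Set.not_nonempty_iff_eq_empty.mp hAe, hjNB])
            refine hjG (Finset.mem_coe.mpr (hPartGood ?_))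
            simp only [hPart, Finset.mem_filter, Finset.mem_univ, true_and]
            exact ⟨hjA, fun hsub' => huA (hsub' huj)⟩
          have hle : ({j : Fin t | j ∉ E0 ∧ ∃ u ∈ P j, ∃ w : V,
              (∃ i ∈ E0, w ∈ P i) ∧ H.Adj u w}.ncard : ℝ) ≤ (Good.card : ℝ) := by
            rw [← Set.ncard_coe_finset Good]
            exact_mod_cast Set.ncard_le_ncard hsub (Set.toFinite _)
          linarith
      have hNFle : (NonFull.card : ℝ) ≤ 3 * (Good.card : ℝ) := by
        have h1 : (NonFull.card : ℝ) ≤ (E0.card : ℝ) + (Good.card : ℝ) := by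
          exact_mod_cast le_trans (Finset.card_le_card hNFsplit) (Finset.card_union_le E0 Good)
        linarith
      -- complement covering
      have hBcov : Aᶜ.ncard ≤ NonFull.card * (Δ * k) := by
        refine cover_le Aᶜ NonFull ?_
        intro v hv i hi
        simp only [hNonFull, Finset.mem_filter, Finset.mem_univ, true_and]
        intro hsub
        exact hv (hsub hi)
      have hcompl : A.ncard + Aᶜ.ncard = n := by
        rw [← hn, ← Nat.card_eq_fintype_card]
        exact Set.ncard_add_ncard_compl A
      have hBcovR : ((Aᶜ.ncard : ℕ) : ℝ) ≤ (NonFull.card : ℝ) * ((Δ:ℝ) * (k:ℝ)) := by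
        exact_mod_cast hBcov
      have hcomplR : (A.ncard : ℝ) + ((Aᶜ.ncard : ℕ) : ℝ) = (n : ℝ) := by exact_mod_cast hcompl
      have hΔk : (0:ℝ) ≤ (Δ:ℝ) * (k:ℝ) := by positivity
      nlinarith
  -- finish
  have hgm : (Good.card : ℝ) ≤ ((NB.ncard : ℕ) : ℝ) := by exact_mod_cast hGoodle
  rw [div_le_iff₀ (by positivity)]
  have hΔk : (0:ℝ) ≤ (Δ:ℝ) * (k:ℝ) := by positivity
  nlinarith [mul_nonneg hmR hΔk, mul_nonneg (mul_nonneg hmR hΔk) (sub_nonneg.mpr hΔR)]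
end
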